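/- Let X be a variable with parent set U (X ∉ U) and let f be a functional CPT for X over {X} ∪ U; for each instantiation u of U let φ(u) denote the unique value x of X with f(x,u) = 1. Let H be a factor over a variable set W ⊇ {X} ∪ U of the form H = f · H₀ for some factor H₀. Then summing X out of H merely selects the functional value: for every instantiation w of W \ {X}, (∑_X H)(w) = H(φ(u), w), where u is the restriction of w to U. -/

import Mathlib

/-- An instantiation of the variables in `S`, where variable `i` has value set `V i`. -/
abbrev Inst {ι : Type*} (V : ι → Type*) (S : Finset ι) : Type _ :=
  ∀ i : S, V i

/-- Restrict an instantiation of `T` to a subset `S ⊆ T`. -/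
def Inst.restrict {ι : Type*} {V : ι → Type*} {S T : Finset ι} (h : S ⊆ T)
    (z : Inst V T) : Inst V S :=
  fun i => z ⟨i, h i.2⟩

/-- Transport an instantiation along an equality of variable sets. -/
def Inst.cast {ι : Type*} {V : ι → Type*} {S T : Finset ι} (h : S = T)
    (z : Inst V S) : Inst V T :=
  fun i => z ⟨i, h.symm ▸ i.2⟩

/-- Extend an instantiation `u` of `U` with a value `x` for the variable `X`,
yielding an instantiation of `insert X U`. -/
def Inst.consX {ι : Type*} [DecidableEq ι] {V : ι → Type*} {U : Finset ι} (X : ι)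
    (x : V X) (u : Inst V U) : Inst V (insert X U) :=
  fun i => if h : (i : ι) = X then _root_.cast (congrArg V h).symm x
           else u ⟨i, (Finset.mem_insert.mp i.2).resolve_left h⟩

/-- Extend an instantiation `w` of `W \ {X}` with a value `x` for `X ∈ W`,
yielding an instantiation of `W`. -/
def Inst.extendAt {ι : Type*} [DecidableEq ι] {V : ι → Type*} {W : Finset ι} (X : ι)
    (_hX : X ∈ W) (x : V X) (w : Inst V (W \ {X})) : Inst V W :=
  fun i => if h : (i : ι) = X then _root_.cast (congrArg V h).symm x
           else w ⟨i, Finset.mem_sdiff.mpr ⟨i.2, Finset.notMem_singleton.mpr h⟩⟩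

/-- The product of a factor over `S` and a factor over `T` is a factor over `S ∪ T`. -/
def Factor.mul {ι : Type*} [DecidableEq ι] {V : ι → Type*} {S T : Finset ι}
    (f : Inst V S → ℝ) (g : Inst V T → ℝ) : Inst V (S ∪ T) → ℝ :=
  fun z => f (fun i => z ⟨i, Finset.mem_union_left _ i.2⟩) *
           g (fun i => z ⟨i, Finset.mem_union_right _ i.2⟩)

/-- Summing out the variables `Y ⊆ S` from a factor over `S` yields a factor over `S \ Y`. -/
noncomputable def Factor.sumOut {ι : Type*} [DecidableEq ι] {V : ι → Type*}
    [∀ i, Fintype (V i)] {S : Finset ι} (Y : Finset ι) (_hY : Y ⊆ S)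
    (f : Inst V S → ℝ) : Inst V (S \ Y) → ℝ :=
  fun z => ∑ y : Inst V Y, f fun i =>
    if h : (i : ι) ∈ Y then y ⟨i, h⟩ else z ⟨i, Finset.mem_sdiff.mpr ⟨i.2, h⟩⟩

namespace Inst

variable {ι : Type*} {V : ι → Type*}

def singletonEquiv (X : ι) : Inst V {X} ≃ V X where
  toFun y := y ⟨X, Finset.mem_singleton_self X⟩
  invFun x i := _root_.cast (congrArg V (Finset.mem_singleton.mp i.2).symm) x
  left_inv y := by
    funext ⟨i, hi⟩
    obtain rfl := Finset.mem_singleton.mp hi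
    rfl
  right_inv _ := rfl

variable [DecidableEq ι]

theorem restrict_extendAt {U W : Finset ι} {X : ι} (hXW : X ∈ W) (hW : insert X U ⊆ W)
    (hUW : U ⊆ W \ {X}) (x : V X) (w : Inst V (W \ {X})) :
    restrict hW (extendAt X hXW x w) = consX X x (restrict hUW w) := by
  funext i
  by_cases h : (i : ι) = X <;> simp [restrict, extendAt, consX, h]

end Inst

theorem Factor.sumOut_singleton {ι : Type*} [DecidableEq ι] {V : ι → Type*}
    [∀ i, Fintype (V i)] {S : Finset ι} {X : ι} (hX : {X} ⊆ S) (F : Inst V S → ℝ)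
    (w : Inst V (S \ {X})) :
    sumOut {X} hX F w =
      ∑ x : V X, F (Inst.extendAt X (Finset.singleton_subset_iff.mp hX) x w) := by
  refine Fintype.sum_equiv (Inst.singletonEquiv X) _ _ fun y => congrArg F ?_
  funext ⟨i, hi⟩
  by_cases h : i = X
  · subst h
    simp [Inst.extendAt, Inst.singletonEquiv]
  · simp [Inst.extendAt, h]

theorem sumOut_functional_selects_general {ι : Type*} [DecidableEq ι] (V : ι → Type*)
    [∀ i, Fintype (V i)]
    (X : ι) (U : Finset ι) (hXU : X ∉ U)
    (f : Inst V (insert X U) → ℝ)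
    (hfun : ∀ (x : V X) (u : Inst V U),
      f (Inst.consX X x u) = 0 ∨ f (Inst.consX X x u) = 1)
    (φ : Inst V U → V X)
    (hφu : ∀ (u : Inst V U) (x : V X), f (Inst.consX X x u) = 1 → x = φ u)
    (W : Finset ι) (hW : insert X U ⊆ W)
    (H : Inst V W → ℝ)
    (H₀ : Inst V W → ℝ) (hH : ∀ z : Inst V W, H z = f (Inst.restrict hW z) * H₀ z) :
    ∀ w : Inst V (W \ {X}),
      Factor.sumOut {X}
          (Finset.singleton_subset_iff.mpr (hW (Finset.mem_insert_self X U))) H w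
        = H (Inst.extendAt X (hW (Finset.mem_insert_self X U))
              (φ (Inst.restrict
                    (Finset.subset_sdiff.mpr
                      ⟨(Finset.subset_insert X U).trans hW,
                        Finset.disjoint_singleton_right.mpr hXU⟩) w))
              w) := by
  intro w
  have hUW : U ⊆ W \ {X} := Finset.subset_sdiff.mpr
    ⟨(Finset.subset_insert X U).trans hW, Finset.disjoint_singleton_right.mpr hXU⟩
  rw [Factor.sumOut_singleton]
  refine Fintype.sum_eq_single _ fun x hx => ?_
  rw [hH, Inst.restrict_extendAt _ hW hUW]
  rcases hfun x (Inst.restrict hUW w) with h | h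
  · rw [h, zero_mul]
  · exact absurd (hφu _ x h) hx

/-- Let `f` be a functional CPT for `X` with parents `U`, and let `φ(u)`
be the unique value of `X` with `f(φ(u), u) = 1`. If the product `H` (over `W ⊇ {X} ∪ U`)
contains `f` as a multiplicand, then summing `X` out of `H` merely selects the functional
value: `(∑_X H)(w) = H(φ(u), w)` where `u` is the restriction of `w` to `U`. -/
theorem sumOut_functional_selects {ι : Type*} [DecidableEq ι] (V : ι → Type*)
    [∀ i, Fintype (V i)] [∀ i, Nonempty (V i)]
    (X : ι) (U : Finset ι) (hXU : X ∉ U)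
    (f : Inst V (insert X U) → ℝ)
    (hfun : ∀ (x : V X) (u : Inst V U),
      f (Inst.consX X x u) = 0 ∨ f (Inst.consX X x u) = 1)
    (hcpt : ∀ u : Inst V U, ∑ x : V X, f (Inst.consX X x u) = 1)
    (φ : Inst V U → V X)
    (hφ : ∀ u : Inst V U, f (Inst.consX X (φ u) u) = 1)
    (hφu : ∀ (u : Inst V U) (x : V X), f (Inst.consX X x u) = 1 → x = φ u)
    (W : Finset ι) (hW : insert X U ⊆ W)
    (H : Inst V W → ℝ)
    (H₀ : Inst V W → ℝ) (hH : ∀ z : Inst V W, H z = f (Inst.restrict hW z) * H₀ z) :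
    ∀ w : Inst V (W \ {X}),
      Factor.sumOut {X}
          (Finset.singleton_subset_iff.mpr (hW (Finset.mem_insert_self X U))) H w
        = H (Inst.extendAt X (hW (Finset.mem_insert_self X U))
              (φ (Inst.restrict
                    (Finset.subset_sdiff.mpr
                      ⟨(Finset.subset_insert X U).trans hW,
                        Finset.disjoint_singleton_right.mpr hXU⟩) w))
              w) :=
  sumOut_functional_selects_general V X U hXU f hfun φ hφu W hW H H₀ hH
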